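/- Let q be a finite positive measure on X, f strictly convex differentiable with f(1)=0, and h : X → ℝ such that f*(h(x)) is q-integrable. Then sup over all finite positive measures p ≪ q of (∫ h dp - D(p‖q)) equals ∫ f*(h(x)) dq(x). -/

import Mathlib

/-!
The supremum decouples pointwise: for `p = ρ • q` we have
`∫ h dp - D(p‖q) = ∫ (h ρ - f ρ) dq`, and `h x * t - f t ≤ f*(h x)` for all `t ≥ 0`
(for `t = 0` by continuity of `f` at `0`) gives the upper bound. For the lower bound, enumerate
a dense set `d 0 = 0, d 1, …` of `[0, ∞)`. The partial maxima
`G_N x = max_{i ≤ N} (h x * d i - f (d i))` are attained at a measurably chosen index, so they are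
values of the objective, and they increase to `f*(h x)` by continuity of `f` on `(0, ∞)`;
monotone convergence finishes the proof.
-/

open MeasureTheory Set Filter Topology

section

variable {X : Type*} [MeasurableSpace X]

noncomputable def fDivergence (f : ℝ → ℝ) (p q : Measure X) : ℝ :=
  ∫ x, f (p.rnDeriv q x).toReal ∂q

def dualObjectiveValues (q : Measure X) (f : ℝ → ℝ) (h : X → ℝ) : Set ℝ :=
  {z | ∃ p : Measure X, IsFiniteMeasure p ∧ p ≪ q ∧ Integrable h p ∧
    Integrable (fun x => f (p.rnDeriv q x).toReal) q ∧ z = ∫ x, h x ∂p - fDivergence f p q}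

variable {q : Measure X} {f : ℝ → ℝ} {h : X → ℝ}

lemma integral_sub_mem_dualObjectiveValues [SigmaFinite q] {ρ : X → ℝ} (hρ : Measurable ρ)
    (hρ_nonneg : ∀ x, 0 ≤ ρ x) (hρ_int : Integrable ρ q)
    (hhρ_int : Integrable (fun x => h x * ρ x) q) (hfρ_int : Integrable (fun x => f (ρ x)) q) :
    ∫ x, (h x * ρ x - f (ρ x)) ∂q ∈ dualObjectiveValues q f h := by
  set p := q.withDensity fun x => ENNReal.ofReal (ρ x)
  have : IsFiniteMeasure p := isFiniteMeasure_withDensity_ofReal hρ_int.hasFiniteIntegral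
  have hpq : p ≪ q := withDensity_absolutelyContinuous _ _
  have hrn : (fun x => (p.rnDeriv q x).toReal) =ᵐ[q] ρ := by
    filter_upwards [Measure.rnDeriv_withDensity q hρ.ennreal_ofReal] with x hx
    rw [hx, ENNReal.toReal_ofReal (hρ_nonneg x)]
  have hsmul : (fun x => (p.rnDeriv q x).toReal • h x) =ᵐ[q] fun x => h x * ρ x := by
    filter_upwards [hrn] with x hx
    rw [hx, smul_eq_mul, mul_comm]
  have hf_rn : (fun x => f (ρ x)) =ᵐ[q] fun x => f (p.rnDeriv q x).toReal := by
    filter_upwards [hrn] with x hx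
    rw [hx]
  refine ⟨p, this, hpq, (integrable_rnDeriv_smul_iff hpq).1 (hhρ_int.congr hsmul.symm),
    hfρ_int.congr hf_rn, ?_⟩
  rw [integral_sub hhρ_int hfρ_int, fDivergence, ← integral_rnDeriv_smul hpq,
    integral_congr_ae hsmul, integral_congr_ae hf_rn]

lemma integral_mem_upperBounds_dualObjectiveValues [SigmaFinite q] {fstar : ℝ → ℝ}
    (hyoung : ∀ u t, 0 ≤ t → u * t - f t ≤ fstar u)
    (hint : Integrable (fun x => fstar (h x)) q) :
    ∫ x, fstar (h x) ∂q ∈ upperBounds (dualObjectiveValues q f h) := by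
  rintro _ ⟨p, _, hpq, hh, hf_int, rfl⟩
  have hρh : Integrable (fun x => (p.rnDeriv q x).toReal • h x) q :=
    (integrable_rnDeriv_smul_iff hpq).2 hh
  rw [fDivergence, ← integral_rnDeriv_smul hpq, ← integral_sub hρh hf_int]
  refine integral_mono (hρh.sub hf_int) hint fun x => ?_
  simpa only [Pi.sub_apply, smul_eq_mul, mul_comm] using
    hyoung (h x) _ (ENNReal.toReal_nonneg (a := p.rnDeriv q x))

lemma measurable_partialSups {g : ℕ → X → ℝ} (hg : ∀ i, Measurable (g i)) (N : ℕ) :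
    Measurable fun x => partialSups (fun i => g i x) N := by
  simp only [partialSups_eq_sup'_range]
  exact Finset.measurable_range_sup'' fun i _ => hg i

lemma exists_measurable_index_eq_partialSups {g : ℕ → X → ℝ} (hg : ∀ i, Measurable (g i))
    (N : ℕ) : ∃ k : X → ℕ, Measurable k ∧ (∀ x, k x ≤ N) ∧
      ∀ x, g (k x) x = partialSups (fun i => g i x) N := by
  classical
  have hex : ∀ x, ∃ j, j ≤ N ∧ g j x = partialSups (fun i => g i x) N := fun x => by
    obtain ⟨j, hjN, hj⟩ := exists_partialSups_eq (fun i => g i x) N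
    exact ⟨j, hjN, hj.symm⟩
  refine ⟨fun x => Nat.find (hex x), measurable_find hex fun j => ?_,
    fun x => (Nat.find_spec (hex x)).1, fun x => (Nat.find_spec (hex x)).2⟩
  exact (MeasurableSet.const _).inter <|
    measurableSet_eq_fun (hg j) (measurable_partialSups hg N)

lemma integrable_comp_of_le [IsFiniteMeasure q] {k : X → ℕ} (hk : Measurable k)
    {N : ℕ} (hkN : ∀ x, k x ≤ N) (φ : ℕ → ℝ) : Integrable (fun x => φ (k x)) q :=
  Integrable.of_bound (measurable_from_nat.comp hk).aestronglyMeasurable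
    (∑ i ∈ Finset.range (N + 1), ‖φ i‖) <| ae_of_all _ fun x =>
      Finset.single_le_sum (f := fun i => ‖φ i‖) (fun _ _ => norm_nonneg _)
        (Finset.mem_range.2 (Nat.lt_succ_of_le (hkN x)))

lemma integral_partialSups_mem_dualObjectiveValues [IsFiniteMeasure q] (hmeas : Measurable h)
    {d : ℕ → ℝ} (hd : ∀ n, 0 ≤ d n) (N : ℕ)
    (hint : Integrable (fun x => partialSups (fun i => h x * d i - f (d i)) N) q) :
    ∫ x, partialSups (fun i => h x * d i - f (d i)) N ∂q ∈ dualObjectiveValues q f h := by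
  obtain ⟨k, hk, hkN, hkmax⟩ := exists_measurable_index_eq_partialSups
    (g := fun i x => h x * d i - f (d i)) (fun i => (hmeas.mul_const _).sub_const _) N
  have hfρ : Integrable (fun x => f (d (k x))) q := integrable_comp_of_le hk hkN (f ∘ d)
  have hhρ : Integrable (fun x => h x * d (k x)) q :=
    (hint.add hfρ).congr (ae_of_all _ fun x => by simp only [Pi.add_apply, ← hkmax]; ring)
  rw [← integral_congr_ae (ae_of_all _ hkmax)]
  exact integral_sub_mem_dualObjectiveValues (measurable_from_nat.comp hk) (fun x => hd _)
    (integrable_comp_of_le hk hkN d) hhρ hfρ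

end

section Pointwise

variable {f : ℝ → ℝ} {u L : ℝ}

lemma mul_sub_le_of_isLUB (hL : IsLUB {z : ℝ | ∃ t : ℝ, 0 < t ∧ z = u * t - f t} L)
    (hcont : ContinuousWithinAt f (Ici 0) 0) {t : ℝ} (ht : 0 ≤ t) : u * t - f t ≤ L := by
  rcases ht.eq_or_lt with rfl | ht
  · have hlim : Tendsto (fun s => u * s - f s) (𝓝[>] 0) (𝓝 (u * 0 - f 0)) :=
      (((continuous_const_mul u).tendsto 0).mono_left nhdsWithin_le_nhds).sub
        (hcont.mono Ioi_subset_Ici_self)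
    exact le_of_tendsto hlim (eventually_nhdsWithin_of_forall fun s hs => hL.1 ⟨s, hs, rfl⟩)
  · exact hL.1 ⟨t, ht, rfl⟩

lemma isLUB_range_mul_sub_of_dense (hL : IsLUB {z : ℝ | ∃ t : ℝ, 0 < t ∧ z = u * t - f t} L)
    (hcont : ContinuousWithinAt f (Ici 0) 0) (hcont_pos : ContinuousOn f (Ioi 0))
    {d : ℕ → ℝ} (hd : ∀ n, 0 ≤ d n) (hd_rat : ∀ r : ℚ, 0 < r → ∃ n, d n = r) :
    IsLUB (range fun n => u * d n - f (d n)) L := by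
  refine ⟨forall_mem_range.2 fun n => mul_sub_le_of_isLUB hL hcont (hd n), fun b hb => hL.2 ?_⟩
  rintro _ ⟨t, ht, rfl⟩
  by_contra! hbt
  have hopen : IsOpen (Ioi 0 ∩ (fun s => u * s - f s) ⁻¹' Ioi b) :=
    ((continuous_const_mul u).continuousOn.sub hcont_pos).isOpen_inter_preimage isOpen_Ioi
      isOpen_Ioi
  obtain ⟨r, hr, hrb⟩ := Rat.denseRange_cast.exists_mem_open hopen ⟨t, ht, hbt⟩
  obtain ⟨n, hn⟩ := hd_rat r (Rat.cast_pos.1 (mem_Ioi.1 hr))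
  have := hb ⟨n, rfl⟩
  simp only [hn] at this
  exact this.not_gt hrb

lemma tendsto_partialSups_of_isLUB {a : ℕ → ℝ} (ha : IsLUB (range a) L) :
    Tendsto (partialSups a) atTop (𝓝 L) := by
  refine tendsto_atTop_isLUB (partialSups_monotone a) ?_
  rwa [IsLUB, upperBounds_range_partialSups]

end Pointwise

/-- Enumerates `{a / b | a b : ℕ} = [0, ∞) ∩ ℚ`, starting from `0`; `a / 0 = 0` in `ℝ`. -/
noncomputable def unpairRatio (n : ℕ) : ℝ := (n.unpair.1 : ℝ) / n.unpair.2

lemma unpairRatio_nonneg (n : ℕ) : 0 ≤ unpairRatio n := by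
  unfold unpairRatio; positivity

lemma unpairRatio_zero : unpairRatio 0 = 0 := by
  simp [unpairRatio]

lemma exists_unpairRatio_eq {r : ℚ} (hr : 0 ≤ r) : ∃ n, unpairRatio n = r := by
  refine ⟨Nat.pair r.num.toNat r.den, ?_⟩
  rw [unpairRatio, Nat.unpair_pair, Rat.cast_def]
  congr 1
  exact_mod_cast Int.toNat_of_nonneg (Rat.num_nonneg.2 hr)

theorem stmt12_general {X : Type*} [MeasurableSpace X]
    (q : Measure X) [IsFiniteMeasure q]
    (f : ℝ → ℝ)
    (hdiff : ∀ x ∈ Ioi (0:ℝ), DifferentiableAt ℝ f x)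
    (hcont : ContinuousWithinAt f (Ici (0:ℝ)) 0)
    (h : X → ℝ) (hmeas : Measurable h)
    (fstar : ℝ → ℝ)
    (hfstar : ∀ u : ℝ, IsLUB {z : ℝ | ∃ t : ℝ, 0 < t ∧ z = u * t - f t} (fstar u))
    (hint : Integrable (fun x => fstar (h x)) q) :
    IsLUB {z : ℝ | ∃ p : Measure X, IsFiniteMeasure p ∧ p ≪ q ∧
        Integrable h p ∧
        Integrable (fun x => f ((p.rnDeriv q x).toReal)) q ∧
        z = (∫ x, h x ∂p) - ∫ x, f ((p.rnDeriv q x).toReal) ∂q}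
      (∫ x, fstar (h x) ∂q) := by
  change IsLUB (dualObjectiveValues q f h) _
  have hyoung (u t : ℝ) (ht : 0 ≤ t) : u * t - f t ≤ fstar u :=
    mul_sub_le_of_isLUB (hfstar u) hcont ht
  set G : ℕ → X → ℝ := fun N x =>
    partialSups (fun i => h x * unpairRatio i - f (unpairRatio i)) N
  have hG_meas (N : ℕ) : Measurable (G N) :=
    measurable_partialSups (fun i => (hmeas.mul_const _).sub_const _) N
  have hG_int (N : ℕ) : Integrable (G N) q := by
    refine integrable_of_le_of_le (hG_meas N).aestronglyMeasurable (g₁ := fun _ => -f 0)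
      (ae_of_all _ fun x => ?_) (ae_of_all _ fun x => ?_) (integrable_const _) hint
    · simpa [unpairRatio_zero] using
        le_partialSups_of_le (fun i => h x * unpairRatio i - f (unpairRatio i)) N.zero_le
    · exact partialSups_le _ _ _ fun i _ => hyoung _ _ (unpairRatio_nonneg i)
  have hG_lim (x : X) : Tendsto (fun N => G N x) atTop (𝓝 (fstar (h x))) :=
    tendsto_partialSups_of_isLUB <| isLUB_range_mul_sub_of_dense (hfstar (h x)) hcont
      (fun t ht => (hdiff t ht).continuousAt.continuousWithinAt) unpairRatio_nonneg
      fun r hr => exists_unpairRatio_eq hr.le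
  have hG_integral_lim := integral_tendsto_of_tendsto_of_monotone hG_int hint
    (ae_of_all _ fun x => partialSups_monotone _) (ae_of_all _ hG_lim)
  refine ⟨integral_mem_upperBounds_dualObjectiveValues hyoung hint, fun b hb => ?_⟩
  exact le_of_tendsto hG_integral_lim (Eventually.of_forall fun N =>
    hb (integral_partialSups_mem_dualObjectiveValues hmeas unpairRatio_nonneg N (hG_int N)))

/-- Computing integrals by duality: for a finite positive measure `q`, `f` strictly convex
and differentiable on `(0,∞)` with `f 1 = 0`, and `h` such that `f* ∘ h` is `q`-integrable,
the supremum over finite positive measures `p ≪ q` of `∫ h dp - D(p‖q)` equals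
`∫ f*(h x) dq x`. -/
theorem stmt12 {X : Type*} [MeasurableSpace X]
    (q : Measure X) [IsFiniteMeasure q]
    (f : ℝ → ℝ)
    (hconv : StrictConvexOn ℝ (Ioi (0:ℝ)) f)
    (hdiff : ∀ x ∈ Ioi (0:ℝ), DifferentiableAt ℝ f x)
    (hf1 : f 1 = 0)
    (hcont : ContinuousWithinAt f (Ici (0:ℝ)) 0)
    (h : X → ℝ) (hmeas : Measurable h)
    (fstar : ℝ → ℝ)
    (hfstar : ∀ u : ℝ, IsLUB {z : ℝ | ∃ t : ℝ, 0 < t ∧ z = u * t - f t} (fstar u))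
    (hint : Integrable (fun x => fstar (h x)) q) :
    IsLUB {z : ℝ | ∃ p : Measure X, IsFiniteMeasure p ∧ p ≪ q ∧
        Integrable h p ∧
        Integrable (fun x => f ((p.rnDeriv q x).toReal)) q ∧
        z = (∫ x, h x ∂p) - ∫ x, f ((p.rnDeriv q x).toReal) ∂q}
      (∫ x, fstar (h x) ∂q) :=
  stmt12_general q f hdiff hcont h hmeas fstar hfstar hint
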